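/- arXiv:1509.05853 — 9 statements merged into one kernel-verified Lean document; each statement's English description precedes it below -/
import Mathlib

section
/- For every integer n ≥ 1 and all real numbers u and θ, the following factorization holds: T_n(u) − cos(nθ) = 2^{n−1} · ∏_{j=0}^{n−1} (u − cos(θ − 2πj/n)). -/
/-!
Write `u = cos φ` with `φ` complex, so that `T_n(u) = cos (n φ)`. In terms of `t = exp (φ i)`,
`2 cos φ = t + t⁻¹`, and `t + t⁻¹ - (s + s⁻¹) = t⁻¹ (t - s) (t - s⁻¹)`. Taking the product over
`s = ζ ^ j w` with `ζ` a primitive `n`-th root of unity, both halves collapse by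
`∏ j, (t - ζ ^ j c) = t ^ n - c ^ n`, leaving `t ^ n + t⁻ⁿ - (w ^ n + w⁻ⁿ)`, i.e.
`2 cos (n φ) - 2 cos (n ψ)` for `w = exp (ψ i)`.
-/

open Real Finset Filter

noncomputable def cT (k : ℤ) (x : ℝ) : ℝ := (Polynomial.Chebyshev.T ℝ k).eval x

noncomputable def cU (k : ℤ) (x : ℝ) : ℝ := (Polynomial.Chebyshev.U ℝ k).eval x

noncomputable def x0 (n : ℕ) (u θ : ℝ) : ℝ :=
  Real.sin (n * θ) / (n * (cT n u - Real.cos (n * θ)))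

noncomputable def x1 (n : ℕ) (u θ : ℝ) : ℝ :=
  -(cT ((n : ℤ) - 1) u * Real.sin θ + u * Real.sin (((n : ℝ) - 1) * θ)) /
      (n * (cT n u - Real.cos (n * θ))) +
    ((n : ℝ) - 1) / (n : ℝ) ^ 2 *
      ∑ j ∈ Finset.Icc 1 (n - 1),
        Real.log (u - Real.cos (θ - 2 * π * j / n)) * Real.sin (2 * π * j / n)

noncomputable def x2 (n : ℕ) (u θ : ℝ) : ℝ :=
  (-(cT ((n : ℤ) - 1) u) * Real.cos θ + u * Real.cos (((n : ℝ) - 1) * θ)) /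
      (n * (cT n u - Real.cos (n * θ))) +
    ((n : ℝ) - 1) / (n : ℝ) ^ 2 *
      ∑ j ∈ Finset.range n,
        Real.log (u - Real.cos (θ - 2 * π * j / n)) * Real.cos (2 * π * j / n)

def Omega (n : ℕ) : Set (ℝ × ℝ) :=
  {p | ∀ j < n, Real.cos (p.2 - 2 * π * j / n) < p.1}

theorem IsPrimitiveRoot.pow_sub_pow_eq_prod_range {R : Type*} [CommRing R] [IsDomain R]
    {n : ℕ} {ζ : R} (hζ : IsPrimitiveRoot ζ n) (hn : 0 < n) (t c : R) :
    t ^ n - c ^ n = ∏ j ∈ range n, (t - ζ ^ j * c) := by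
  simpa [Polynomial.eval_prod] using congrArg (Polynomial.eval t) (X_pow_sub_C_eq_prod hζ hn rfl)

theorem add_inv_sub_add_inv {K : Type*} [Field K] {t s : K} (ht : t ≠ 0) (hs : s ≠ 0) :
    t + t⁻¹ - (s + s⁻¹) = t⁻¹ * ((t - s) * (t - s⁻¹)) := by
  field_simp
  ring

theorem IsPrimitiveRoot.prod_add_inv_sub_add_inv {K : Type*} [Field K] {n : ℕ} {ζ : K}
    (hζ : IsPrimitiveRoot ζ n) (hn : 0 < n) {t w : K} (ht : t ≠ 0) (hw : w ≠ 0) :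
    ∏ j ∈ range n, (t + t⁻¹ - (ζ ^ j * w + (ζ ^ j * w)⁻¹)) =
      t ^ n + (t ^ n)⁻¹ - (w ^ n + (w ^ n)⁻¹) := by
  have hζ0 : ζ ≠ 0 := hζ.ne_zero hn.ne'
  have hfactor : ∀ j ∈ range n, t + t⁻¹ - (ζ ^ j * w + (ζ ^ j * w)⁻¹) =
      t⁻¹ * ((t - ζ ^ j * w) * (t - ζ⁻¹ ^ j * w⁻¹)) := fun j _ => by
    rw [add_inv_sub_add_inv ht (by positivity), mul_inv, inv_pow]
  rw [prod_congr rfl hfactor, prod_mul_distrib, prod_mul_distrib, prod_const, card_range,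
    ← hζ.pow_sub_pow_eq_prod_range hn, ← hζ.inv.pow_sub_pow_eq_prod_range hn, inv_pow, inv_pow]
  field_simp
  ring

namespace Complex

theorem two_cos_eq_exp_add_inv (x : ℂ) : 2 * cos x = exp (x * I) + (exp (x * I))⁻¹ := by
  rw [two_cos, ← exp_neg, neg_mul]

theorem prod_two_cos_sub_two_cos {n : ℕ} (hn : 0 < n) (φ ψ : ℂ) :
    ∏ j ∈ range n, (2 * cos φ - 2 * cos (ψ + 2 * π * j / n)) =
      2 * cos (n * φ) - 2 * cos (n * ψ) := by
  have hζ : IsPrimitiveRoot (exp (2 * π * I / n)) n := isPrimitiveRoot_exp n hn.ne'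
  have hroot : ∀ j : ℕ, exp ((ψ + 2 * π * j / n) * I) = exp (2 * π * I / n) ^ j * exp (ψ * I) :=
    fun j => by
      rw [← exp_nat_mul, ← exp_add]
      ring_nf
  have hpow : ∀ x : ℂ, exp (x * I) ^ n = exp ((n * x) * I) := fun x => by
    rw [← exp_nat_mul, mul_assoc]
  simp only [two_cos_eq_exp_add_inv, hroot]
  rw [hζ.prod_add_inv_sub_add_inv hn (exp_ne_zero _) (exp_ne_zero _), hpow, hpow]

theorem cos_nat_mul_sub_cos_nat_mul {n : ℕ} (hn : 0 < n) (φ θ : ℂ) :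
    cos (n * φ) - cos (n * θ) =
      2 ^ (n - 1) * ∏ j ∈ range n, (cos φ - cos (θ - 2 * π * j / n)) := by
  have h := prod_two_cos_sub_two_cos hn φ (-θ)
  have hcos : ∀ j : ℕ, cos (-θ + 2 * π * j / n) = cos (θ - 2 * π * j / n) := fun j => by
    rw [← cos_neg]
    ring_nf
  simp only [hcos, ← mul_sub, prod_mul_distrib, prod_const, card_range, mul_neg, cos_neg] at h
  rw [← pow_sub_one_mul hn.ne'] at h
  linear_combination -h / 2

end Complex

theorem stmt0 (n : ℕ) (hn : 1 ≤ n) (u θ : ℝ) :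
    cT n u - Real.cos (n * θ) =
      2 ^ (n - 1) * ∏ j ∈ Finset.range n, (u - Real.cos (θ - 2 * π * j / n)) := by
  obtain ⟨φ, hφ⟩ := Complex.cos_surjective (u : ℂ)
  apply Complex.ofReal_injective
  push_cast [cT, Complex.ofReal_cos]
  rw [← hφ, Polynomial.Chebyshev.T_complex_cos]
  exact Complex.cos_nat_mul_sub_cos_nat_mul hn φ θ
end

section
/- Let n be an integer with n > 2. Then the Chebyshev polynomial U_{n−1}, viewed as a real function, is strictly monotone increasing on the interval [cos(π/(n−1)), ∞) and maps this interval onto [−1, ∞). For n = 2, U_1 is strictly monotone increasing on [cos π, ∞) = [−1, ∞) and maps it onto [−2, ∞). Furthermore, for every integer n ≥ 2, U_{n−1}(cos(π/n)) = 0 and U_{n−1}(1) = n. -/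
/-!
On `[1, ∞)` the identities `U_{k+2} = 2 T_{k+2} + U_k` and `T_k (cosh t) = cosh (k t)` make every
`U_k` with `k ≥ 1` strictly increasing, and having positive degree and leading coefficient it is
unbounded above.

On `[cos β, 1]`, `β = π / (n - 1)`, substitute `x = cos α`: then `U_{n-1} (cos α) = sin (n α) / sin α`,
whose derivative is `W(α) / sin² α` for the Wronskian `W(α) = n cos (n α) sin α - sin (n α) cos α`.
As `W' = (1 - n²) sin (n α) sin α`, `W` decreases from `W(0) = 0` on `[0, π / n]` and then increases up
to `W(β) = (1 - n) sin β cos β ≤ 0` (this needs `β ≤ π / 2`, i.e. `n ≥ 3`), so `W < 0` on `(0, β)`.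
The endpoint values come from `n β = π + β` and `n (π / n) = π`.
-/

open Real Finset Filter

open Polynomial Polynomial.Chebyshev Set

lemma cU_one_apply (x : ℝ) : cU 1 x = 2 * x := by simp [cU]

lemma continuous_cU (k : ℤ) : Continuous (cU k) := (U ℝ k).continuous

lemma cU_apply_one (k : ℤ) : cU k 1 = k + 1 := U_eval_one ℝ k

lemma cU_cos_eq_div (k : ℤ) {α : ℝ} (hα : sin α ≠ 0) :
    cU k (cos α) = sin ((k + 1) * α) / sin α :=
  eq_div_of_mul_eq hα (U_real_cos α k)

lemma cU_cos_pi_div {n : ℕ} (hn : 2 ≤ n) : cU ((n : ℤ) - 1) (cos (π / n)) = 0 := by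
  have hn' : (2 : ℝ) ≤ n := by exact_mod_cast hn
  have hsin : 0 < sin (π / n) :=
    sin_pos_of_pos_of_lt_pi (div_pos pi_pos (by linarith)) (div_lt_self pi_pos (by linarith))
  have hnπ : (((n : ℤ) - 1 : ℤ) + 1 : ℝ) * (π / n) = π := by
    push_cast; field_simp [show (n : ℝ) ≠ 0 by linarith]; ring
  rw [cU_cos_eq_div _ hsin.ne', hnπ, sin_pi, zero_div]

lemma cU_cos_pi_div_sub_one {n : ℕ} (hn : 2 < n) :
    cU ((n : ℤ) - 1) (cos (π / ((n : ℝ) - 1))) = -1 := by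
  have hn' : (3 : ℝ) ≤ n := by exact_mod_cast hn
  set β := π / ((n : ℝ) - 1) with hβ
  have hsin : 0 < sin β :=
    sin_pos_of_pos_of_lt_pi (div_pos pi_pos (by linarith)) (div_lt_self pi_pos (by linarith))
  have hnβ : (((n : ℤ) - 1 : ℤ) + 1 : ℝ) * β = β + π := by
    push_cast; rw [hβ]; field_simp [show (n : ℝ) - 1 ≠ 0 by linarith]; ring
  rw [cU_cos_eq_div _ hsin.ne', hnβ, sin_add_pi, neg_div_self hsin.ne']

lemma strictMonoOn_eval_T_Ici_one {k : ℕ} (hk : 0 < k) :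
    StrictMonoOn (fun x => (T ℝ k).eval x) (Ici 1) := by
  intro x hx y hy hxy
  have hx0 : 0 ≤ arcosh x := arcosh_nonneg hx
  have hy0 : 0 ≤ arcosh y := arcosh_nonneg hy
  have harcosh : arcosh x < arcosh y :=
    (arcosh_lt_arcosh (by linarith [mem_Ici.1 hx]) (by linarith [mem_Ici.1 hy])).2 hxy
  dsimp only
  rw [← cosh_arcosh hx, ← cosh_arcosh hy, T_real_cosh, T_real_cosh]
  have hk' : (0 : ℝ) < k := by exact_mod_cast hk
  exact cosh_strictMonoOn (mem_Ici.2 (by positivity)) (mem_Ici.2 (by positivity))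
    (by push_cast; gcongr)

lemma cU_natCast_add_two (j : ℕ) (x : ℝ) :
    cU (j + 2 : ℕ) x = 2 * (T ℝ (j + 2 : ℕ)).eval x + cU j x := by
  rw [cU, cU, Nat.cast_add, Nat.cast_two, U_eq_two_mul_T_add_U]
  simp

lemma strictMonoOn_cU_natCast_Ici_one : ∀ k : ℕ, 0 < k → StrictMonoOn (cU k) (Ici 1)
  | 1, _ => fun x _ y _ hxy => by simp only [Nat.cast_one, cU_one_apply]; linarith
  | j + 2, _ => fun x hx y hy hxy => by
    have hT := strictMonoOn_eval_T_Ici_one (k := j + 2) (by omega) hx hy hxy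
    have hU : cU j x ≤ cU j y := by
      rcases Nat.eq_zero_or_pos j with rfl | hj
      · simp [cU]
      · exact (strictMonoOn_cU_natCast_Ici_one j hj hx hy hxy).le
    rw [cU_natCast_add_two, cU_natCast_add_two]
    dsimp only at hT
    linarith

lemma strictMonoOn_cU_Ici_one {k : ℤ} (hk : 0 < k) : StrictMonoOn (cU k) (Ici 1) := by
  lift k to ℕ using hk.le
  exact strictMonoOn_cU_natCast_Ici_one k (by exact_mod_cast hk)

lemma tendsto_cU_atTop {k : ℤ} (hk : 0 < k) : Tendsto (cU k) atTop atTop := by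
  lift k to ℕ using hk.le
  exact (U ℝ k).tendsto_atTop_of_leadingCoeff_nonneg
    (by rw [degree_U_natCast]; exact_mod_cast hk)
    (by rw [leadingCoeff_U_natCast]; positivity)

noncomputable def sinWronskian (n α : ℝ) : ℝ :=
  n * cos (n * α) * sin α - sin (n * α) * cos α

lemma hasDerivAt_sinWronskian (n α : ℝ) :
    HasDerivAt (sinWronskian n) ((1 - n ^ 2) * sin (n * α) * sin α) α := by
  have hlin : HasDerivAt (fun t => n * t) n α := by simpa using (hasDerivAt_id α).const_mul n
  have hsin := (hasDerivAt_sin (n * α)).comp α hlin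
  have hcos := (hasDerivAt_cos (n * α)).comp α hlin
  have := ((hcos.const_mul n).mul (hasDerivAt_sin α)).sub (hsin.mul (hasDerivAt_cos α))
  exact this.congr_deriv (by simp only [Function.comp_apply]; ring)

lemma strictAntiOn_sinWronskian {n : ℝ} (hn : 1 < n) :
    StrictAntiOn (sinWronskian n) (Icc 0 (π / n)) := by
  have hn0 : 0 < n := by linarith
  refine strictAntiOn_of_deriv_neg (convex_Icc _ _)
    (fun α _ => (hasDerivAt_sinWronskian n α).continuousAt.continuousWithinAt) fun α hα => ?_
  rw [interior_Icc] at hα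
  rw [(hasDerivAt_sinWronskian n α).deriv]
  have hnα : n * α < π := by have := (lt_div_iff₀ hn0).1 hα.2; linarith
  have hα_lt_pi : α < π := hα.2.trans_le (div_le_self pi_pos.le hn.le)
  have hsin_nα := sin_pos_of_pos_of_lt_pi (mul_pos hn0 hα.1) hnα
  have hsin_α := sin_pos_of_pos_of_lt_pi hα.1 hα_lt_pi
  have : 1 - n ^ 2 < 0 := by nlinarith
  exact mul_neg_of_neg_of_pos (mul_neg_of_neg_of_pos this hsin_nα) hsin_α

lemma strictMonoOn_sinWronskian {n : ℝ} (hn : 2 ≤ n) :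
    StrictMonoOn (sinWronskian n) (Icc (π / n) (π / (n - 1))) := by
  have hn0 : 0 < n := by linarith
  have hn1 : 0 < n - 1 := by linarith
  refine strictMonoOn_of_deriv_pos (convex_Icc _ _)
    (fun α _ => (hasDerivAt_sinWronskian n α).continuousAt.continuousWithinAt) fun α hα => ?_
  rw [interior_Icc] at hα
  rw [(hasDerivAt_sinWronskian n α).deriv]
  obtain ⟨hlow, hup⟩ := hα
  rw [div_lt_iff₀ hn0] at hlow
  rw [lt_div_iff₀ hn1] at hup
  have hα0 : 0 < α := by nlinarith [pi_pos]
  have hsin_nα : sin (n * α) < 0 := by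
    rw [← neg_pos, ← sin_sub_pi]
    exact sin_pos_of_pos_of_lt_pi (by linarith) (by nlinarith)
  have hsin_α : 0 < sin α := sin_pos_of_pos_of_lt_pi hα0 (by nlinarith)
  have : 1 - n ^ 2 < 0 := by nlinarith
  exact mul_pos (mul_pos_of_neg_of_neg this hsin_nα) hsin_α

lemma sinWronskian_pi_div_sub_one_nonpos {n : ℝ} (hn : 3 ≤ n) :
    sinWronskian n (π / (n - 1)) ≤ 0 := by
  set β := π / (n - 1) with hβ
  have hnβ : n * β = π + β := by
    rw [hβ]; field_simp [show n - 1 ≠ 0 by linarith]; ring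
  have hβ0 : 0 < β := div_pos pi_pos (by linarith)
  have hβ_le : β ≤ π / 2 := div_le_div_of_nonneg_left pi_pos.le two_pos (by linarith)
  have hsin : 0 < sin β := sin_pos_of_pos_of_lt_pi hβ0 (by linarith [pi_pos])
  have hcos : 0 ≤ cos β := cos_nonneg_of_mem_Icc ⟨by linarith, hβ_le⟩
  have : sinWronskian n β = (1 - n) * (sin β * cos β) := by
    rw [sinWronskian, hnβ, cos_add, sin_add, cos_pi, sin_pi]
    ring
  rw [this]
  exact mul_nonpos_of_nonpos_of_nonneg (by linarith) (by positivity)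

lemma sinWronskian_neg {n α : ℝ} (hn : 3 ≤ n) (hα : α ∈ Ioo 0 (π / (n - 1))) :
    sinWronskian n α < 0 := by
  have hπn : π / n ≤ π / (n - 1) :=
    div_le_div_of_nonneg_left pi_pos.le (by linarith) (by linarith)
  rcases le_or_gt α (π / n) with h | h
  · calc sinWronskian n α < sinWronskian n 0 :=
          strictAntiOn_sinWronskian (by linarith) ⟨le_rfl, by positivity⟩ ⟨hα.1.le, h⟩ hα.1
      _ = 0 := by simp [sinWronskian]
  · calc sinWronskian n α < sinWronskian n (π / (n - 1)) :=
          strictMonoOn_sinWronskian (by linarith) ⟨h.le, hα.2.le⟩ ⟨hπn, le_rfl⟩ hα.2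
      _ ≤ 0 := sinWronskian_pi_div_sub_one_nonpos hn

lemma hasDerivAt_sin_const_mul (c α : ℝ) :
    HasDerivAt (fun t => sin (c * t)) (c * cos (c * α)) α := by
  simpa [mul_comm] using ((hasDerivAt_id α).const_mul c).sin

lemma hasDerivAt_cU_comp_cos (k : ℤ) {α : ℝ} (hα : sin α ≠ 0) :
    HasDerivAt (fun t => cU k (cos t)) (sinWronskian (k + 1) α / sin α ^ 2) α := by
  have hg := ((U ℝ k).hasDerivAt (cos α)).comp α (hasDerivAt_cos α)
  set d := (derivative (U ℝ k)).eval (cos α) * -sin α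
  have hU := U_real_cos α k
  have hd : d * sin α + (U ℝ k).eval (cos α) * cos α = (k + 1) * cos ((k + 1) * α) := by
    have hprod := hg.mul (hasDerivAt_sin α)
    rw [show ((fun x => (U ℝ k).eval x) ∘ cos) * sin = fun t => sin ((k + 1) * t) from
      funext fun t => U_real_cos t k] at hprod
    exact hprod.unique (hasDerivAt_sin_const_mul _ α)
  refine hg.congr_deriv ?_
  rw [sinWronskian, eq_div_iff (pow_ne_zero 2 hα)]
  linear_combination sin α * hd - cos α * hU

lemma strictAntiOn_cU_comp_cos {n : ℕ} (hn : 2 < n) :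
    StrictAntiOn (fun α => cU ((n : ℤ) - 1) (cos α)) (Icc 0 (π / ((n : ℝ) - 1))) := by
  have hn' : (3 : ℝ) ≤ n := by exact_mod_cast hn
  refine strictAntiOn_of_deriv_neg (convex_Icc _ _)
    ((continuous_cU _).comp continuous_cos).continuousOn fun α hα => ?_
  rw [interior_Icc] at hα
  have hsin : sin α ≠ 0 :=
    (sin_pos_of_pos_of_lt_pi hα.1 (hα.2.trans_le (div_le_self pi_pos.le (by linarith)))).ne'
  have hcast : (((n : ℤ) - 1 : ℤ) : ℝ) + 1 = n := by push_cast; ring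
  rw [(hasDerivAt_cU_comp_cos _ hsin).deriv, hcast]
  exact div_neg_of_neg_of_pos (sinWronskian_neg hn' hα) (by positivity)

lemma StrictAntiOn.strictMonoOn_of_comp_cos {f : ℝ → ℝ} {b : ℝ} (hb₀ : 0 ≤ b) (hbπ : b ≤ π)
    (hf : StrictAntiOn (fun α => f (cos α)) (Icc 0 b)) : StrictMonoOn f (Icc (cos b) 1) := by
  have harccos : ∀ {x}, x ∈ Icc (cos b) 1 → arccos x ∈ Icc 0 b ∧ cos (arccos x) = x :=
    fun hx => ⟨⟨arccos_nonneg _, (arccos_le_arccos hx.1).trans (arccos_cos hb₀ hbπ).le⟩,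
      cos_arccos ((neg_one_le_cos b).trans hx.1) hx.2⟩
  intro x hx y hy hxy
  obtain ⟨hx_mem, hx_cos⟩ := harccos hx
  obtain ⟨hy_mem, hy_cos⟩ := harccos hy
  have := hf hy_mem hx_mem (arccos_lt_arccos ((neg_one_le_cos b).trans hx.1) hxy hy.2)
  simpa only [hx_cos, hy_cos] using this

lemma strictMonoOn_cU_Ici {n : ℕ} (hn : 2 < n) :
    StrictMonoOn (cU ((n : ℤ) - 1)) (Ici (cos (π / ((n : ℝ) - 1)))) := by
  have hn' : (3 : ℝ) ≤ n := by exact_mod_cast hn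
  have hIcc := (strictAntiOn_cU_comp_cos hn).strictMonoOn_of_comp_cos
    (div_pos pi_pos (by linarith)).le (div_le_self pi_pos.le (by linarith))
  have hIci := strictMonoOn_cU_Ici_one (k := (n : ℤ) - 1) (by omega)
  rw [← Icc_union_Ici_eq_Ici (cos_le_one _)]
  exact hIcc.union hIci (isGreatest_Icc (cos_le_one _)) isLeast_Ici

theorem stmt3 (n : ℕ) (hn : 2 ≤ n) :
    (2 < n →
      StrictMonoOn (cU ((n : ℤ) - 1)) (Set.Ici (Real.cos (π / ((n : ℝ) - 1)))) ∧
      cU ((n : ℤ) - 1) '' Set.Ici (Real.cos (π / ((n : ℝ) - 1))) = Set.Ici (-1)) ∧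
    (n = 2 →
      StrictMonoOn (cU 1) (Set.Ici (Real.cos π)) ∧
      Set.Ici (Real.cos π) = Set.Ici (-1 : ℝ) ∧
      cU 1 '' Set.Ici (Real.cos π) = Set.Ici (-2)) ∧
    cU ((n : ℤ) - 1) (Real.cos (π / n)) = 0 ∧
    cU ((n : ℤ) - 1) 1 = n := by
  refine ⟨fun h => ⟨strictMonoOn_cU_Ici h, ?_⟩, fun _ => ?_, cU_cos_pi_div hn,
    by rw [cU_apply_one]; push_cast; ring⟩
  · rw [(continuous_cU _).continuousOn.image_Ici_of_monotoneOn
      (strictMonoOn_cU_Ici h).monotoneOn (tendsto_cU_atTop (by omega)),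
      cU_cos_pi_div_sub_one h]
  · have hmono : StrictMonoOn (cU 1) (Ici (cos π)) := fun x _ y _ hxy => by
      simp only [cU_one_apply]; linarith
    refine ⟨hmono, by rw [cos_pi], ?_⟩
    rw [(continuous_cU 1).continuousOn.image_Ici_of_monotoneOn hmono.monotoneOn
      (tendsto_cU_atTop one_pos), cU_one_apply, cos_pi]
    norm_num
end

section
/- Define, for r > 0 and θ ∈ ℝ with r⁴ − 2r²·cos(2θ) + 1 ≠ 0: x₀ = r²·sin(2θ)/(r⁴ − 2r²·cos(2θ) + 1), x₁ = −r(r²+1)·sin θ/(r⁴ − 2r²·cos(2θ) + 1), and x₂ = (1/4)·log((r² − 2r·cos θ + 1)/(r² + 2r·cos θ + 1)). Then tanh(2x₂) = −2r·cos θ/(r² + 1), and consequently x₀ = x₁ · tanh(2x₂); in particular, the image of the map (r,θ) ↦ (x₀, x₁, x₂) is contained in the graph t = x·tanh(2y) in coordinates (t,x,y). -/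
open Real

lemma tanh_half_log {u : ℝ} (hu : 0 < u) :
    Real.tanh ((1 / 2) * Real.log u) = (u - 1) / (u + 1) := by
  set t := (1 / 2) * Real.log u with ht
  have he : Real.exp t ^ 2 = u := by
    rw [← Real.exp_nat_mul]
    norm_num [ht]
    rw [show (2 : ℝ) * (1 / 2 * Real.log u) = Real.log u by ring, Real.exp_log hu]
  have hepos : 0 < Real.exp t := Real.exp_pos t
  rw [Real.tanh_eq_sinh_div_cosh, Real.sinh_eq, Real.cosh_eq, Real.exp_neg]
  rw [← he]
  have h1 : Real.exp t + (Real.exp t)⁻¹ ≠ 0 := by positivity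
  have h2 : Real.exp t ^ 2 + 1 ≠ 0 := by positivity
  field_simp

theorem stmt6 (r θ : ℝ) (hr : 0 < r)
    (hd : r ^ 4 - 2 * r ^ 2 * Real.cos (2 * θ) + 1 ≠ 0) :
    Real.tanh (2 * ((1 / 4) *
        Real.log ((r ^ 2 - 2 * r * Real.cos θ + 1) / (r ^ 2 + 2 * r * Real.cos θ + 1)))) =
      -(2 * r * Real.cos θ) / (r ^ 2 + 1) ∧
    r ^ 2 * Real.sin (2 * θ) / (r ^ 4 - 2 * r ^ 2 * Real.cos (2 * θ) + 1) =
      -(r * (r ^ 2 + 1) * Real.sin θ) / (r ^ 4 - 2 * r ^ 2 * Real.cos (2 * θ) + 1) *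
        Real.tanh (2 * ((1 / 4) *
          Real.log ((r ^ 2 - 2 * r * Real.cos θ + 1) / (r ^ 2 + 2 * r * Real.cos θ + 1)))) := by
  set A := r ^ 2 - 2 * r * Real.cos θ + 1 with hA
  set B := r ^ 2 + 2 * r * Real.cos θ + 1 with hB
  have hcos2 : Real.cos (2 * θ) = 2 * Real.cos θ ^ 2 - 1 := Real.cos_two_mul θ
  have hfact : r ^ 4 - 2 * r ^ 2 * Real.cos (2 * θ) + 1 = A * B := by
    rw [hcos2, hA, hB]; ring
  have hAnn : 0 ≤ A := by
    have h1 : Real.cos θ ^ 2 ≤ 1 := Real.cos_sq_le_one θ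
    nlinarith [sq_nonneg (r - Real.cos θ)]
  have hBnn : 0 ≤ B := by
    have h1 : Real.cos θ ^ 2 ≤ 1 := Real.cos_sq_le_one θ
    nlinarith [sq_nonneg (r + Real.cos θ)]
  have hAB : A * B ≠ 0 := hfact ▸ hd
  have hA0 : 0 < A := lt_of_le_of_ne hAnn (fun h => hAB (by rw [← h]; ring))
  have hB0 : 0 < B := lt_of_le_of_ne hBnn (fun h => hAB (by rw [← h]; ring))
  have hu : 0 < A / B := div_pos hA0 hB0
  have h2 : (2 : ℝ) * (1 / 4 * Real.log (A / B)) = (1 / 2) * Real.log (A / B) := by ring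
  have htanh : Real.tanh (2 * ((1 / 4) * Real.log (A / B))) = -(2 * r * Real.cos θ) / (r ^ 2 + 1) := by
    rw [h2, tanh_half_log hu]
    have hBne : B ≠ 0 := ne_of_gt hB0
    have hr2 : (r : ℝ) ^ 2 + 1 ≠ 0 := by positivity
    have hsum : A / B + 1 ≠ 0 := by
      have : A / B + 1 = (A + B) / B := by field_simp
      rw [this]
      have : A + B = 2 * (r ^ 2 + 1) := by rw [hA, hB]; ring
      rw [this]
      positivity
    field_simp
    rw [hA, hB]; ring
  refine ⟨htanh, ?_⟩
  rw [htanh, Real.sin_two_mul]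
  have hr2 : (r : ℝ) ^ 2 + 1 ≠ 0 := by positivity
  field_simp
end

section
/- Let n ≥ 2 be an integer and let (u,θ) ∈ Ω_n. Then (u,−θ) ∈ Ω_n and (u, θ + 2π/n) ∈ Ω_n, and the following symmetries hold componentwise: x₀(u,−θ) = −x₀(u,θ), x₁(u,−θ) = −x₁(u,θ), x₂(u,−θ) = x₂(u,θ); and x₀(u, θ+2π/n) = x₀(u,θ), x₁(u, θ+2π/n) = x₁(u,θ)·cos(2π/n) + x₂(u,θ)·sin(2π/n), x₂(u, θ+2π/n) = −x₁(u,θ)·sin(2π/n) + x₂(u,θ)·cos(2π/n). -/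
open Real Finset Filter

section
variable {n : ℕ} (u θ : ℝ)

private lemma range_split (hn : 2 ≤ n) (f : ℕ → ℝ) :
    ∑ j ∈ Finset.range n, f j = f 0 + ∑ j ∈ Finset.Icc 1 (n - 1), f j := by
  have : Finset.range n = insert 0 (Finset.Icc 1 (n - 1)) := by
    ext x; simp only [Finset.mem_range, Finset.mem_insert, Finset.mem_Icc]; omega
  rw [this, Finset.sum_insert (by simp)]

private lemma icc_shift (hn : 2 ≤ n) (g : ℕ → ℝ) :
    ∑ j ∈ Finset.Icc 1 (n - 1), g j = ∑ i ∈ Finset.range (n - 1), g (1 + i) := by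
  have h1 : Finset.Icc 1 (n - 1) = Finset.Ico 1 n := by
    ext x; simp only [Finset.mem_Icc, Finset.mem_Ico]; omega
  rw [h1, Finset.sum_Ico_eq_sum_range]

private lemma range_last (hn : 2 ≤ n) (g : ℕ → ℝ) :
    ∑ j ∈ Finset.range n, g j = (∑ i ∈ Finset.range (n - 1), g i) + g (n - 1) := by
  conv_lhs => rw [show n = (n - 1) + 1 by omega]
  rw [Finset.sum_range_succ]

private lemma aux_refl_sin (hn : 2 ≤ n) :
    ∑ j ∈ Finset.Icc 1 (n - 1),
        Real.log (u - Real.cos (-θ - 2 * π * j / n)) * Real.sin (2 * π * j / n)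
      = -∑ j ∈ Finset.Icc 1 (n - 1),
        Real.log (u - Real.cos (θ - 2 * π * j / n)) * Real.sin (2 * π * j / n) := by
  have hn0 : (n : ℝ) ≠ 0 := Nat.cast_ne_zero.mpr (by omega)
  rw [← Finset.sum_neg_distrib]
  refine Finset.sum_nbij' (fun j => n - j) (fun j => n - j) ?_ ?_ ?_ ?_ ?_
  · intro a ha; simp only [Finset.mem_Icc] at *; omega
  · intro a ha; simp only [Finset.mem_Icc] at *; omega
  · intro a ha; simp only [Finset.mem_Icc] at ha; show n - (n - a) = a; omega
  · intro a ha; simp only [Finset.mem_Icc] at ha; show n - (n - a) = a; omega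
  · intro a ha
    simp only [Finset.mem_Icc] at ha
    have hc : ((n - a : ℕ) : ℝ) = (n : ℝ) - a := by
      push_cast [Nat.cast_sub (by omega : a ≤ n)]; ring
    rw [hc]
    have h1 : θ - 2 * π * ((n : ℝ) - a) / n = (θ + 2 * π * a / n) - 2 * π := by
      field_simp; ring
    have h2 : (2 : ℝ) * π * ((n : ℝ) - a) / n = 2 * π - 2 * π * a / n := by
      field_simp
    have h3 : -θ - 2 * π * a / n = -(θ + 2 * π * a / n) := by ring
    rw [h1, h2, Real.cos_sub_two_pi, h3, Real.cos_neg, Real.sin_sub, Real.sin_two_pi,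
      Real.cos_two_pi]
    ring

private lemma aux_refl_cos (hn : 2 ≤ n) :
    ∑ j ∈ Finset.range n,
        Real.log (u - Real.cos (-θ - 2 * π * j / n)) * Real.cos (2 * π * j / n)
      = ∑ j ∈ Finset.range n,
        Real.log (u - Real.cos (θ - 2 * π * j / n)) * Real.cos (2 * π * j / n) := by
  have hn0 : (n : ℝ) ≠ 0 := Nat.cast_ne_zero.mpr (by omega)
  rw [range_split hn, range_split hn]
  congr 1
  · norm_num
  refine Finset.sum_nbij' (fun j => n - j) (fun j => n - j) ?_ ?_ ?_ ?_ ?_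
  · intro a ha; simp only [Finset.mem_Icc] at *; omega
  · intro a ha; simp only [Finset.mem_Icc] at *; omega
  · intro a ha; simp only [Finset.mem_Icc] at ha; show n - (n - a) = a; omega
  · intro a ha; simp only [Finset.mem_Icc] at ha; show n - (n - a) = a; omega
  · intro a ha
    simp only [Finset.mem_Icc] at ha
    have hc : ((n - a : ℕ) : ℝ) = (n : ℝ) - a := by
      push_cast [Nat.cast_sub (by omega : a ≤ n)]; ring
    rw [hc]
    have h1 : θ - 2 * π * ((n : ℝ) - a) / n = (θ + 2 * π * a / n) - 2 * π := by
      field_simp; ring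
    have h2 : (2 : ℝ) * π * ((n : ℝ) - a) / n = 2 * π - 2 * π * a / n := by
      field_simp
    have h3 : -θ - 2 * π * a / n = -(θ + 2 * π * a / n) := by ring
    rw [h1, h2, Real.cos_sub_two_pi, h3, Real.cos_neg, Real.cos_sub, Real.sin_two_pi,
      Real.cos_two_pi]
    ring

end

section
variable {n : ℕ} (u θ : ℝ)

private lemma aux_rot_sin (hn : 2 ≤ n) :
    (∑ j ∈ Finset.Icc 1 (n - 1),
        Real.log (u - Real.cos (θ + 2 * π / n - 2 * π * j / n)) * Real.sin (2 * π * j / n))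
      = Real.cos (2 * π / n) *
          ∑ j ∈ Finset.Icc 1 (n - 1),
            Real.log (u - Real.cos (θ - 2 * π * j / n)) * Real.sin (2 * π * j / n)
        + Real.sin (2 * π / n) *
          ∑ j ∈ Finset.range n,
            Real.log (u - Real.cos (θ - 2 * π * j / n)) * Real.cos (2 * π * j / n) := by
  have hn0 : (n : ℝ) ≠ 0 := Nat.cast_ne_zero.mpr (by omega)
  have hcast : ((n - 1 : ℕ) : ℝ) = (n : ℝ) - 1 := by
    push_cast [Nat.cast_sub (by omega : 1 ≤ n)]; ring
  rw [icc_shift hn]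
  have hL : ∀ i ∈ Finset.range (n - 1),
      Real.log (u - Real.cos (θ + 2 * π / n - 2 * π * ((1 + i : ℕ) : ℝ) / n)) *
          Real.sin (2 * π * ((1 + i : ℕ) : ℝ) / n)
        = Real.cos (2 * π / n) *
            (Real.log (u - Real.cos (θ - 2 * π * i / n)) * Real.sin (2 * π * i / n))
          + Real.sin (2 * π / n) *
            (Real.log (u - Real.cos (θ - 2 * π * i / n)) * Real.cos (2 * π * i / n)) := by
    intro i _
    have e1 : θ + 2 * π / n - 2 * π * ((1 + i : ℕ) : ℝ) / n = θ - 2 * π * i / n := by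
      push_cast; field_simp; ring
    have e2 : 2 * π * ((1 + i : ℕ) : ℝ) / n = 2 * π * i / n + 2 * π / n := by
      push_cast; field_simp; ring
    rw [e1, e2, Real.sin_add]; ring
  rw [Finset.sum_congr rfl hL, Finset.sum_add_distrib, ← Finset.mul_sum, ← Finset.mul_sum]
  have hS1 := range_split hn
    (fun j : ℕ => Real.log (u - Real.cos (θ - 2 * π * j / n)) * Real.sin (2 * π * j / n))
  have hS1' := range_last hn
    (fun j : ℕ => Real.log (u - Real.cos (θ - 2 * π * j / n)) * Real.sin (2 * π * j / n))
  have hS2 := range_last hn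
    (fun j : ℕ => Real.log (u - Real.cos (θ - 2 * π * j / n)) * Real.cos (2 * π * j / n))
  simp only [Nat.cast_zero, mul_zero, zero_div, Real.sin_zero, zero_add] at hS1
  rw [hcast] at hS1' hS2
  rw [← hS1, hS1', hS2]
  have hb : Real.sin (2 * π * ((n : ℝ) - 1) / n) * Real.cos (2 * π / n)
      + Real.cos (2 * π * ((n : ℝ) - 1) / n) * Real.sin (2 * π / n) = 0 := by
    rw [← Real.sin_add, show 2 * π * ((n : ℝ) - 1) / n + 2 * π / n = 2 * π by field_simp; ring,
      Real.sin_two_pi]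
  linear_combination (-Real.log (u - Real.cos (θ - 2 * π * ((n : ℝ) - 1) / n))) * hb

private lemma aux_rot_cos (hn : 2 ≤ n) :
    (∑ j ∈ Finset.range n,
        Real.log (u - Real.cos (θ + 2 * π / n - 2 * π * j / n)) * Real.cos (2 * π * j / n))
      = Real.cos (2 * π / n) *
          ∑ j ∈ Finset.range n,
            Real.log (u - Real.cos (θ - 2 * π * j / n)) * Real.cos (2 * π * j / n)
        - Real.sin (2 * π / n) *
          ∑ j ∈ Finset.Icc 1 (n - 1),
            Real.log (u - Real.cos (θ - 2 * π * j / n)) * Real.sin (2 * π * j / n) := by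
  have hn0 : (n : ℝ) ≠ 0 := Nat.cast_ne_zero.mpr (by omega)
  have hcast : ((n - 1 : ℕ) : ℝ) = (n : ℝ) - 1 := by
    push_cast [Nat.cast_sub (by omega : 1 ≤ n)]; ring
  rw [range_split hn, icc_shift hn]
  simp only [Nat.cast_zero, mul_zero, zero_div, sub_zero, Real.cos_zero, mul_one]
  have h0 : Real.log (u - Real.cos (θ + 2 * π / n))
      = Real.log (u - Real.cos (θ - 2 * π * ((n : ℝ) - 1) / n)) := by
    rw [show θ - 2 * π * ((n : ℝ) - 1) / n = (θ + 2 * π / n) - 2 * π by field_simp; ring,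
      Real.cos_sub_two_pi]
  have hL : ∀ i ∈ Finset.range (n - 1),
      Real.log (u - Real.cos (θ + 2 * π / n - 2 * π * ((1 + i : ℕ) : ℝ) / n)) *
          Real.cos (2 * π * ((1 + i : ℕ) : ℝ) / n)
        = Real.cos (2 * π / n) *
            (Real.log (u - Real.cos (θ - 2 * π * i / n)) * Real.cos (2 * π * i / n))
          - Real.sin (2 * π / n) *
            (Real.log (u - Real.cos (θ - 2 * π * i / n)) * Real.sin (2 * π * i / n)) := by
    intro i _
    have e1 : θ + 2 * π / n - 2 * π * ((1 + i : ℕ) : ℝ) / n = θ - 2 * π * i / n := by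
      push_cast; field_simp; ring
    have e2 : 2 * π * ((1 + i : ℕ) : ℝ) / n = 2 * π * i / n + 2 * π / n := by
      push_cast; field_simp; ring
    rw [e1, e2, Real.cos_add]; ring
  rw [Finset.sum_congr rfl hL, Finset.sum_sub_distrib, ← Finset.mul_sum, ← Finset.mul_sum]
  have hS1 := range_split hn
    (fun j : ℕ => Real.log (u - Real.cos (θ - 2 * π * j / n)) * Real.sin (2 * π * j / n))
  have hS1' := range_last hn
    (fun j : ℕ => Real.log (u - Real.cos (θ - 2 * π * j / n)) * Real.sin (2 * π * j / n))
  have hS2 := range_last hn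
    (fun j : ℕ => Real.log (u - Real.cos (θ - 2 * π * j / n)) * Real.cos (2 * π * j / n))
  simp only [Nat.cast_zero, mul_zero, zero_div, Real.sin_zero, zero_add] at hS1
  rw [hcast] at hS1' hS2
  rw [← hS1, hS1', hS2, h0]
  have hb : Real.cos (2 * π * ((n : ℝ) - 1) / n) * Real.cos (2 * π / n)
      - Real.sin (2 * π * ((n : ℝ) - 1) / n) * Real.sin (2 * π / n) = 1 := by
    rw [← Real.cos_add, show 2 * π * ((n : ℝ) - 1) / n + 2 * π / n = 2 * π by field_simp; ring,
      Real.cos_two_pi]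
  linear_combination (-Real.log (u - Real.cos (θ - 2 * π * ((n : ℝ) - 1) / n))) * hb

end

theorem stmt7 (n : ℕ) (hn : 2 ≤ n) (u θ : ℝ) (h : (u, θ) ∈ Omega n) :
    (u, -θ) ∈ Omega n ∧ (u, θ + 2 * π / n) ∈ Omega n ∧
    x0 n u (-θ) = -x0 n u θ ∧
    x1 n u (-θ) = -x1 n u θ ∧
    x2 n u (-θ) = x2 n u θ ∧
    x0 n u (θ + 2 * π / n) = x0 n u θ ∧
    x1 n u (θ + 2 * π / n) = x1 n u θ * Real.cos (2 * π / n) + x2 n u θ * Real.sin (2 * π / n) ∧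
    x2 n u (θ + 2 * π / n) = -(x1 n u θ) * Real.sin (2 * π / n) + x2 n u θ * Real.cos (2 * π / n) := by
  have hn0 : (n : ℝ) ≠ 0 := Nat.cast_ne_zero.mpr (by omega)
  simp only [Omega, Set.mem_setOf_eq] at h
  have hOm1 : (u, -θ) ∈ Omega n := by
    intro j hj
    simp only
    by_cases hj0 : j = 0
    · subst hj0
      have := h 0 (by omega)
      simp only [Nat.cast_zero, mul_zero, zero_div, sub_zero] at this ⊢
      rwa [Real.cos_neg]
    · have hle : j ≤ n := by omega
      have := h (n - j) (by omega)
      have hc : ((n - j : ℕ) : ℝ) = (n : ℝ) - j := by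
        push_cast [Nat.cast_sub hle]; ring
      rw [hc, show θ - 2 * π * ((n : ℝ) - j) / n = (θ + 2 * π * j / n) - 2 * π by
        field_simp; ring, Real.cos_sub_two_pi] at this
      rwa [show -θ - 2 * π * (j : ℝ) / n = -(θ + 2 * π * j / n) by ring, Real.cos_neg]
  have hOm2 : (u, θ + 2 * π / n) ∈ Omega n := by
    intro j hj
    simp only
    by_cases hj0 : j = 0
    · subst hj0
      have := h (n - 1) (by omega)
      have hc : ((n - 1 : ℕ) : ℝ) = (n : ℝ) - 1 := by
        push_cast [Nat.cast_sub (by omega : 1 ≤ n)]; ring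
      rw [hc, show θ - 2 * π * ((n : ℝ) - 1) / n = (θ + 2 * π / n) - 2 * π by
        field_simp; ring, Real.cos_sub_two_pi] at this
      simpa using this
    · have := h (j - 1) (by omega)
      have hc : ((j - 1 : ℕ) : ℝ) = (j : ℝ) - 1 := by
        push_cast [Nat.cast_sub (by omega : 1 ≤ j)]; ring
      rw [hc, show θ - 2 * π * ((j : ℝ) - 1) / n = θ + 2 * π / n - 2 * π * j / n by
        field_simp; ring] at this
      exact this
  have hang : (n : ℝ) * (θ + 2 * π / n) = (n : ℝ) * θ + 2 * π := by field_simp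
  have hang2 : ((n : ℝ) - 1) * (θ + 2 * π / n) = (((n : ℝ) - 1) * θ - 2 * π / n) + 2 * π := by
    field_simp; ring
  refine ⟨hOm1, hOm2, ?_, ?_, ?_, ?_, ?_, ?_⟩
  · simp [x0, mul_neg, Real.sin_neg, Real.cos_neg, neg_div]
  · simp only [x1, mul_neg, Real.sin_neg, Real.cos_neg]
    rw [aux_refl_sin u θ hn]
    ring
  · simp only [x2, mul_neg, Real.sin_neg, Real.cos_neg]
    rw [aux_refl_cos u θ hn]
  · simp only [x0]
    rw [hang, Real.sin_add_two_pi, Real.cos_add_two_pi]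
  · simp only [x1, x2]
    rw [hang, hang2, Real.sin_add_two_pi, Real.cos_add_two_pi, aux_rot_sin u θ hn,
      Real.sin_add θ (2 * π / n), Real.sin_sub (((n : ℝ) - 1) * θ) (2 * π / n)]
    ring
  · simp only [x1, x2]
    rw [hang, hang2, Real.cos_add_two_pi, Real.cos_add_two_pi, aux_rot_cos u θ hn,
      Real.cos_add θ (2 * π / n), Real.cos_sub (((n : ℝ) - 1) * θ) (2 * π / n)]
    ring
end

section
/- Let n ≥ 2 be an integer. If (u,θ) ∈ ℝ² satisfies u > cos θ and 0 ≤ θ ≤ π/n, then for every integer j with 2 ≤ j ≤ n−1 one has u − cos(θ − 2πj/n) ≥ 2·sin²(π/n). -/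
open Real Finset Filter

lemma sin_ge_aux {n : ℕ} (hn : 2 ≤ n) {x : ℝ} (h1 : π / n ≤ x) (h2 : x ≤ π - π / n) :
    Real.sin (π / n) ≤ Real.sin x := by
  have hπ : (0:ℝ) < π := Real.pi_pos
  have hn' : (2:ℝ) ≤ n := by exact_mod_cast hn
  have hn0 : (0:ℝ) < n := by linarith
  have hhalf : π / n ≤ π / 2 := by
    apply div_le_div_of_nonneg_left hπ.le (by norm_num) hn'
  have hnn : 0 < π / n := div_pos hπ hn0
  rcases le_or_gt x (π / 2) with hx | hx
  · exact Real.strictMonoOn_sin.monotoneOn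
      (Set.mem_Icc.2 ⟨by linarith, hhalf⟩) (Set.mem_Icc.2 ⟨by linarith, hx⟩) h1
  · nth_rewrite 2 [← Real.sin_pi_sub]
    exact Real.strictMonoOn_sin.monotoneOn
      (Set.mem_Icc.2 ⟨by linarith, hhalf⟩)
      (Set.mem_Icc.2 ⟨by linarith, by linarith⟩) (by linarith)

theorem stmt8 (n : ℕ) (hn : 2 ≤ n) (u θ : ℝ)
    (hu : Real.cos θ < u) (hθ0 : 0 ≤ θ) (hθ1 : θ ≤ π / n)
    (j : ℕ) (hj2 : 2 ≤ j) (hjn : j ≤ n - 1) :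
    u - Real.cos (θ - 2 * π * j / n) ≥ 2 * Real.sin (π / n) ^ 2 := by
  have hπ : (0:ℝ) < π := Real.pi_pos
  have hn3 : 3 ≤ n := by omega
  have hn' : (3:ℝ) ≤ n := by exact_mod_cast hn3
  have hn0 : (0:ℝ) < n := by linarith
  have hj2' : (2:ℝ) ≤ j := by exact_mod_cast hj2
  have hjn' : (j:ℝ) ≤ (n:ℝ) - 1 := by
    have h : j + 1 ≤ n := by omega
    have h' : ((j:ℝ)) + 1 ≤ n := by exact_mod_cast h
    linarith
  set c : ℝ := π / n with hc
  have hcpos : 0 < c := div_pos hπ hn0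
  have hnc : (n:ℝ) * c = π := by
    rw [hc]; field_simp
  have key : Real.cos θ - Real.cos (θ - 2 * π * j / n) =
      2 * Real.sin ((j:ℝ) * c - θ) * Real.sin ((j:ℝ) * c) := by
    rw [Real.cos_sub_cos]
    have e1 : (θ + (θ - 2 * π * j / n)) / 2 = -(((j:ℝ)) * c - θ) := by
      rw [hc]; field_simp; ring
    have e2 : (θ - (θ - 2 * π * j / n)) / 2 = (j:ℝ) * c := by
      rw [hc]; field_simp; ring
    rw [e1, e2, Real.sin_neg]
    ring
  have hb1 : c ≤ (j:ℝ) * c - θ := by nlinarith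
  have hb1' : (j:ℝ) * c - θ ≤ π - c := by nlinarith
  have hb2 : c ≤ (j:ℝ) * c := by nlinarith
  have hb2' : (j:ℝ) * c ≤ π - c := by nlinarith
  have h1 : Real.sin c ≤ Real.sin ((j:ℝ) * c - θ) := sin_ge_aux hn hb1 hb1'
  have h2 : Real.sin c ≤ Real.sin ((j:ℝ) * c) := sin_ge_aux hn hb2 hb2'
  have hs : 0 < Real.sin c := by
    apply Real.sin_pos_of_pos_of_lt_pi hcpos
    rw [hc]
    calc π / n ≤ π / 3 := by
          apply div_le_div_of_nonneg_left hπ.le (by norm_num) hn'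
      _ < π := by linarith
  nlinarith [key, hs, h1, h2]
end

section
/- Let n ≥ 2 be an integer. For every real θ there exists j ∈ {0,1,…,n−1} with cos(θ − 2πj/n) ≥ cos(π/n); consequently, every (u,θ) in Ω_n satisfies u > cos(π/n). Moreover, every (u,θ) ∈ Ω_n satisfies T_n(u) > cos(nθ). -/
open Real Finset Filter

/-! Every angle `θ` lies within `π / n` of some multiple `2πk/n`; writing `θ = β + 2πk/n`, the
sector index is `j = k mod n`, and `nθ ≡ nβ` modulo `2π`. In `Omega n` we then have
`cos β < u`. For `u ≤ 1` put `u = cos α` with `α ∈ [0, π]`; monotonicity of `cos` on `[0, π]`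
gives `α < |β| ≤ π / n`, hence `T_n(u) = cos(nα) > cos(n|β|) = cos(nθ)`. For `u > 1`,
`T_n(u) > 1 ≥ cos(nθ)`. -/

theorem cos_sub_two_pi_mul_emod_div {n : ℕ} (hn : 0 < n) (θ : ℝ) (k : ℤ) :
    cos (θ - 2 * π * (k % n).toNat / n) = cos (θ - 2 * π * k / n) := by
  have hk : (((k % n).toNat : ℕ) : ℝ) = k - n * (k / n : ℤ) := by
    have h : ((k % n).toNat : ℤ) = k - n * (k / n) := by
      have := Int.emod_nonneg k (by omega : (n : ℤ) ≠ 0)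
      have := Int.emod_add_mul_ediv k n
      omega
    exact_mod_cast h
  have hn' : (n : ℝ) ≠ 0 := by positivity
  rw [hk, show θ - 2 * π * (k - n * (k / n : ℤ)) / n = θ - 2 * π * k / n + (k / n : ℤ) * (2 * π)
    by field_simp; ring, cos_add_int_mul_two_pi]

theorem exists_cos_sub_eq_cos_of_abs_le {n : ℕ} (hn : 0 < n) (θ : ℝ) :
    ∃ j < n, ∃ β : ℝ, |β| ≤ π / n ∧
      cos (θ - 2 * π * j / n) = cos β ∧ cos (n * θ) = cos (n * β) := by
  set k : ℤ := round (n * θ / (2 * π))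
  have hn' : (0 : ℝ) < n := by exact_mod_cast hn
  have hj : (k % n).toNat < n := by
    have := Int.emod_lt_of_pos k (by omega : (0 : ℤ) < n)
    omega
  refine ⟨(k % n).toNat, hj, θ - 2 * π * k / n, ?_,
    cos_sub_two_pi_mul_emod_div hn θ k, ?_⟩
  · have hβ : θ - 2 * π * k / n = (2 * π / n) * (n * θ / (2 * π) - k) := by
      field_simp
    calc |θ - 2 * π * k / n| = (2 * π / n) * |n * θ / (2 * π) - k| := by
          rw [hβ, abs_mul, abs_of_pos (by positivity)]
      _ ≤ (2 * π / n) * (1 / 2) := by gcongr; exact abs_sub_round _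
      _ = π / n := by ring
  · rw [show (n : ℝ) * θ = n * (θ - 2 * π * k / n) + k * (2 * π) by field_simp; ring,
      cos_add_int_mul_two_pi]

theorem exists_cos_sub_ge_cos_pi_div {n : ℕ} (hn : 0 < n) (θ : ℝ) :
    ∃ j < n, cos (π / n) ≤ cos (θ - 2 * π * j / n) := by
  obtain ⟨j, hj, β, hβ, hcos, -⟩ := exists_cos_sub_eq_cos_of_abs_le hn θ
  refine ⟨j, hj, ?_⟩
  rw [hcos, ← cos_abs β]
  exact cos_le_cos_of_nonneg_of_le_pi (abs_nonneg β)
    (div_le_self pi_pos.le (Nat.one_le_cast.mpr hn)) hβ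

theorem cos_nat_mul_lt_eval_T_of_cos_lt {n : ℕ} (hn : 0 < n) {u β : ℝ}
    (hβ : |β| ≤ π / n) (hu : cos β < u) :
    cos (n * β) < (Polynomial.Chebyshev.T ℝ n).eval u := by
  rcases lt_or_ge 1 u with hu1 | hu1
  · exact (cos_le_one _).trans_lt
      (Polynomial.Chebyshev.one_lt_eval_T_real (by exact_mod_cast hn.ne') hu1)
  have hn' : (0 : ℝ) < n := by exact_mod_cast hn
  have hnβ : n * |β| ≤ π := by
    rw [le_div_iff₀ hn'] at hβ
    linarith
  have hβ_mem : |β| ∈ Set.Icc 0 π :=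
    ⟨abs_nonneg β, hβ.trans (div_le_self pi_pos.le (Nat.one_le_cast.mpr hn))⟩
  have harccos_mem : arccos u ∈ Set.Icc 0 π := ⟨arccos_nonneg u, arccos_le_pi u⟩
  have hcos_arccos : cos (arccos u) = u :=
    cos_arccos ((neg_one_le_cos β).trans hu.le) hu1
  have harccos_lt : arccos u < |β| :=
    (strictAntiOn_cos.lt_iff_gt hβ_mem harccos_mem).1 (by rwa [cos_abs, hcos_arccos])
  have hn_mul_lt : n * arccos u < n * |β| := mul_lt_mul_of_pos_left harccos_lt hn'
  rw [← hcos_arccos, Polynomial.Chebyshev.T_real_cos, ← cos_abs (n * β), abs_mul, Nat.abs_cast,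
    Int.cast_natCast]
  exact (strictAntiOn_cos.lt_iff_gt ⟨by positivity, hnβ⟩
    ⟨mul_nonneg hn'.le harccos_mem.1, hn_mul_lt.le.trans hnβ⟩).2 hn_mul_lt

theorem stmt9 (n : ℕ) (hn : 2 ≤ n) :
    (∀ θ : ℝ, ∃ j < n, Real.cos (θ - 2 * π * j / n) ≥ Real.cos (π / n)) ∧
    (∀ p ∈ Omega n, Real.cos (π / n) < p.1) ∧
    (∀ p ∈ Omega n, Real.cos (n * p.2) < cT n p.1) := by
  have hn0 : 0 < n := by omega
  refine ⟨exists_cos_sub_ge_cos_pi_div hn0, fun p hp => ?_, fun p hp => ?_⟩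
  · obtain ⟨j, hj, hcos⟩ := exists_cos_sub_ge_cos_pi_div hn0 p.2
    exact hcos.trans_lt (hp j hj)
  · obtain ⟨j, hj, β, hβ, hcos, hcos_n⟩ := exists_cos_sub_eq_cos_of_abs_le hn0 p.2
    rw [hcos_n]
    exact cos_nat_mul_lt_eval_T_of_cos_lt hn0 hβ (hcos ▸ hp j hj)
end

section
/- Let n ≥ 2 be an integer. For every (u,θ) ∈ ℝ² with u > cos θ and 0 ≤ θ ≤ π/n, the quantity x₀(u,θ) = sin(nθ)/(n(T_n(u) − cos(nθ))) is well-defined (its denominator is positive) and satisfies x₀(u,θ) ≥ 0. -/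
open Real Finset Filter

lemma cT_rec (k : ℤ) (x : ℝ) : cT (k+2) x = 2*x*cT (k+1) x - cT k x := by
  unfold cT
  rw [Polynomial.Chebyshev.T_add_two]
  simp [mul_assoc]

lemma cT_gt (x : ℝ) (hx : 1 < x) : ∀ k : ℕ, 1 ≤ cT k x ∧ cT k x < cT (k+1) x := by
  intro k
  induction k with
  | zero => constructor <;> simp [cT, hx]
  | succ k ih =>
    obtain ⟨h1, h2⟩ := ih
    have h3 : (1:ℝ) ≤ cT (k+1) x := le_of_lt (lt_of_le_of_lt h1 h2)
    refine ⟨h3, ?_⟩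
    push_cast
    rw [show ((k:ℤ)+1)+1 = (k:ℤ)+2 by ring, cT_rec]
    nlinarith

theorem stmt10 (n : ℕ) (hn : 2 ≤ n) (u θ : ℝ)
    (hu : Real.cos θ < u) (hθ0 : 0 ≤ θ) (hθ1 : θ ≤ π / n) :
    0 < (n : ℝ) * (cT n u - Real.cos (n * θ)) ∧ 0 ≤ x0 n u θ := by
  have hnpos : (0:ℝ) < n := by positivity
  have hπ : (0:ℝ) < π := Real.pi_pos
  have hnθπ : (n:ℝ) * θ ≤ π := by
    rw [le_div_iff₀ hnpos] at hθ1; linarith [hθ1]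
  have hnθ0 : 0 ≤ (n:ℝ) * θ := by positivity
  have key : Real.cos ((n:ℝ) * θ) < cT n u := by
    rcases le_or_gt u 1 with hu1 | hu1
    · -- u ≤ 1 : use arccos
      have hum : -1 ≤ u := le_trans (neg_one_le_cos θ) (le_of_lt hu)
      set α := Real.arccos u with hα
      have hcos : Real.cos α = u := Real.cos_arccos hum hu1
      have hn1 : (1:ℝ) ≤ n := by exact_mod_cast Nat.one_le_of_lt hn
      have hθπ : θ ≤ π := le_trans hθ1 (by
        rw [div_le_iff₀ hnpos]
        nlinarith)
      have hαlt : α < θ := by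
        have hmem1 : Real.cos θ ∈ Set.Icc (-1:ℝ) 1 := ⟨neg_one_le_cos θ, cos_le_one θ⟩
        have hmem2 : u ∈ Set.Icc (-1:ℝ) 1 := ⟨hum, hu1⟩
        have := Real.strictAntiOn_arccos hmem1 hmem2 hu
        rwa [Real.arccos_cos hθ0 hθπ] at this
      have hα0 : 0 ≤ α := Real.arccos_nonneg u
      have hTeq : cT n u = Real.cos ((n:ℝ) * α) := by
        rw [← hcos]
        unfold cT
        rw [Polynomial.Chebyshev.T_real_cos]
        push_cast
        ring_nf
      rw [hTeq]
      apply Real.cos_lt_cos_of_nonneg_of_le_pi (by positivity) hnθπ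
      have : (n:ℝ) * α < (n:ℝ) * θ := by nlinarith
      exact this
    · -- u > 1
      have h := cT_gt u hu1 (n - 1)
      have hcast : ((n - 1 : ℕ) : ℤ) + 1 = (n : ℤ) := by omega
      have h2 : cT ((n-1:ℕ):ℤ) u < cT n u := by
        rw [← hcast]; exact h.2
      have : 1 < cT n u := lt_of_le_of_lt h.1 h2
      exact lt_of_le_of_lt (Real.cos_le_one _) this
  have hpos : 0 < (n:ℝ) * (cT n u - Real.cos ((n:ℝ) * θ)) := by
    apply mul_pos hnpos
    linarith
  refine ⟨hpos, ?_⟩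
  unfold x0
  apply div_nonneg _ (le_of_lt hpos)
  exact Real.sin_nonneg_of_nonneg_of_le_pi hnθ0 hnθπ
end

section
/- Let n ≥ 2 be an integer and fix θ_∞ with 0 ≤ θ_∞ < π/n. Then x₂(u,θ) tends to −∞ as (u,θ) tends to (cos θ_∞, θ_∞) within the fundamental domain Ω_n⁰ = {(u,θ) : u > cos θ, 0 ≤ θ ≤ π/n}; that is, for every sequence (u_k, θ_k) in Ω_n⁰ converging to (cos θ_∞, θ_∞), the sequence x₂(u_k, θ_k) tends to −∞. -/
open Real Finset Filter Topology

lemma cU_nat_one : ∀ m : ℕ, cU (m : ℤ) 1 = (m : ℝ) + 1 := by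
  intro m
  induction m using Nat.twoStepInduction with
  | zero => simp [cU, Polynomial.Chebyshev.U_zero]
  | one => simp [cU, Polynomial.Chebyshev.U_one]; norm_num
  | more m ih ih1 =>
    have h2 : ((m + 2 : ℕ) : ℤ) = (m : ℤ) + 2 := by push_cast; ring
    have h1 : ((m + 1 : ℕ) : ℤ) = (m : ℤ) + 1 := by push_cast; ring
    rw [h2]
    unfold cU at *
    rw [Polynomial.Chebyshev.U_add_two]
    rw [h1] at ih1
    simp only [Polynomial.eval_sub, Polynomial.eval_mul, Polynomial.eval_ofNat,
      Polynomial.eval_X, Polynomial.eval_one]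
    rw [ih1, ih]
    push_cast; ring

lemma hasDerivAt_cT (m : ℤ) (x : ℝ) :
    HasDerivAt (fun y => cT m y) ((m : ℝ) * cU (m - 1) x) x := by
  have h := (Polynomial.Chebyshev.T ℝ m).hasDerivAt x
  rw [Polynomial.Chebyshev.T_derivative_eq_U] at h
  simpa [cT, cU] using h

lemma cT_slope (m : ℤ) {a b : ℝ} (hab : a < b) :
    ∃ ξ ∈ Set.Ioo a b, cT m b - cT m a = (b - a) * ((m : ℝ) * cU (m - 1) ξ) := by
  obtain ⟨c, hc, hc2⟩ := exists_hasDerivAt_eq_slope (fun y => cT m y)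
    (fun y => (m : ℝ) * cU (m - 1) y) hab
    ((Polynomial.continuous _).continuousOn) (fun x _ => hasDerivAt_cT m x)
  refine ⟨c, hc, ?_⟩
  have hba : b - a ≠ 0 := sub_ne_zero.2 hab.ne'
  have := (div_eq_iff hba).1 hc2.symm
  linarith [this]

lemma coslt (n : ℕ) (hn : 2 ≤ n) {θinf : ℝ} (h0 : 0 ≤ θinf) (h1 : θinf < π / n)
    {j : ℕ} (hj1 : 1 ≤ j) (hj2 : j < n) :
    Real.cos (θinf - 2 * π * j / n) < Real.cos θinf := by
  have hπ := Real.pi_pos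
  have hn0 : (0 : ℝ) < n := by positivity
  have hj1' : (1 : ℝ) ≤ j := by exact_mod_cast hj1
  have hj2' : (j : ℝ) ≤ (n : ℝ) - 1 := by
    have : (j : ℝ) + 1 ≤ n := by exact_mod_cast hj2
    linarith
  set a := 2 * π * j / n with ha
  have e : a / 2 = π * j / n := by rw [ha]; ring
  have e3 : π - π / n = π * ((n : ℝ) - 1) / n := by field_simp
  have h2 : π / n ≤ a / 2 := by
    rw [e]
    calc π / n = π * 1 / n := by ring
    _ ≤ π * j / n := (div_le_div_iff_of_pos_right hn0).2 (by nlinarith)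
  have h3 : a / 2 ≤ π - π / n := by
    rw [e, e3]
    exact (div_le_div_iff_of_pos_right hn0).2 (by nlinarith)
  have hpn : 0 < π / n := by positivity
  have hs1 : 0 < Real.sin (a / 2) :=
    Real.sin_pos_of_pos_of_lt_pi (lt_of_lt_of_le hpn h2) (lt_of_le_of_lt h3 (by linarith))
  have hs2 : Real.sin (θinf - a / 2) < 0 :=
    Real.sin_neg_of_neg_of_neg_pi_lt (by linarith) (by linarith)
  have hcc := Real.cos_sub_cos (θinf - a) θinf
  rw [show (θinf - a + θinf) / 2 = θinf - a / 2 by ring,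
    show (θinf - a - θinf) / 2 = -(a / 2) by ring, Real.sin_neg] at hcc
  nlinarith [mul_pos hs1 (neg_pos.2 hs2)]

lemma tendsto_cU (c : ℤ) {f : ℕ → ℝ} {x : ℝ} (hf : Tendsto f atTop (𝓝 x)) :
    Tendsto (fun k => cU c (f k)) atTop (𝓝 (cU c x)) :=
  ((Polynomial.continuous _).tendsto x).comp hf

lemma tendsto_cT (c : ℤ) {f : ℕ → ℝ} {x : ℝ} (hf : Tendsto f atTop (𝓝 x)) :
    Tendsto (fun k => cT c (f k)) atTop (𝓝 (cT c x)) :=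
  ((Polynomial.continuous _).tendsto x).comp hf

lemma div_key {d m N w : ℝ} (hd : d ≠ 0) : (d * m) / (N * (d * w)) = m / (N * w) := by
  rcases eq_or_ne w 0 with h | h
  · simp [h]
  rcases eq_or_ne N 0 with h2 | h2
  · simp [h2]
  field_simp

theorem stmt11 (n : ℕ) (hn : 2 ≤ n) (θinf : ℝ) (h0 : 0 ≤ θinf) (h1 : θinf < π / n)
    (us θs : ℕ → ℝ)
    (hmem : ∀ k, Real.cos (θs k) < us k ∧ 0 ≤ θs k ∧ θs k ≤ π / n)
    (hconv : Filter.Tendsto (fun k => (us k, θs k)) Filter.atTop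
      (nhds (Real.cos θinf, θinf))) :
    Filter.Tendsto (fun k => x2 n (us k) (θs k)) Filter.atTop Filter.atBot := by
  have hπ : (0 : ℝ) < π := Real.pi_pos
  have hnn : 0 < n := by omega
  have hn0 : (0 : ℝ) < n := by exact_mod_cast hnn
  have hu : Tendsto us atTop (𝓝 (Real.cos θinf)) := (continuous_fst.tendsto _).comp hconv
  have hθ : Tendsto θs atTop (𝓝 θinf) := (continuous_snd.tendsto _).comp hconv
  have hcos : Tendsto (fun k => Real.cos (θs k)) atTop (𝓝 (Real.cos θinf)) := (Real.continuous_cos.tendsto _).comp hθ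
  have hdpos : ∀ k, 0 < us k - Real.cos (θs k) := fun k => sub_pos.2 (hmem k).1
  have hd : Tendsto (fun k => us k - Real.cos (θs k)) atTop (𝓝 0) := by
    simpa using hu.sub hcos
  have hlog : Tendsto (fun k => Real.log (us k - Real.cos (θs k))) atTop atBot :=
    Real.tendsto_log_nhdsGT_zero.comp
      (tendsto_nhdsWithin_iff.2 ⟨hd, Eventually.of_forall fun k => Set.mem_Ioi.2 (hdpos k)⟩)
  choose ξ hξ hslope1 using fun k => cT_slope (n : ℤ) (hmem k).1
  choose η hη hslope2 using fun k => cT_slope ((n : ℤ) - 1) (hmem k).1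
  have hξt : Tendsto ξ atTop (𝓝 (Real.cos θinf)) :=
    tendsto_of_tendsto_of_tendsto_of_le_of_le hcos hu (fun k => (hξ k).1.le)
      (fun k => (hξ k).2.le)
  have hηt : Tendsto η atTop (𝓝 (Real.cos θinf)) :=
    tendsto_of_tendsto_of_tendsto_of_le_of_le hcos hu (fun k => (hη k).1.le)
      (fun k => (hη k).2.le)
  -- positivity of U_{n-1}(cos θinf)
  have hμ : 0 < cU ((n : ℤ) - 1) (Real.cos θinf) := by
    rcases eq_or_lt_of_le h0 with h | h
    · rw [← h, Real.cos_zero]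
      have hc : ((n : ℤ) - 1) = ((n - 1 : ℕ) : ℤ) := by omega
      rw [hc, cU_nat_one]
      positivity
    · have hsin : 0 < Real.sin θinf := by
        apply Real.sin_pos_of_pos_of_lt_pi h
        have h2n : (2:ℝ) ≤ n := by exact_mod_cast hn
        have : π / n ≤ π := by
          rw [div_le_iff₀ hn0]; nlinarith
        linarith
    
      have hS : 0 < Real.sin ((n : ℝ) * θinf) := by
        apply Real.sin_pos_of_pos_of_lt_pi (by positivity)
        have := (lt_div_iff₀ hn0).1 h1
        linarith
      have hs := Polynomial.Chebyshev.U_real_cos θinf ((n : ℤ) - 1)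
      have hs' : cU ((n : ℤ) - 1) (Real.cos θinf) * Real.sin θinf
          = Real.sin ((n : ℝ) * θinf) := by
        rw [cU, hs]; push_cast; ring_nf
      have : cU ((n : ℤ) - 1) (Real.cos θinf)
          = Real.sin ((n : ℝ) * θinf) / Real.sin θinf := by
        rw [eq_div_iff hsin.ne']; exact hs'
      rw [this]
      exact div_pos hS hsin
  -- limit of the rational part
  have hA : Tendsto (fun k =>
      (-Real.cos (θs k) * (((n : ℝ) - 1) * cU ((n : ℤ) - 1 - 1) (η k))
        + cT ((n : ℤ) - 1) (Real.cos (θs k))) /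
      ((n : ℝ) * ((n : ℝ) * cU ((n : ℤ) - 1) (ξ k)))) atTop (𝓝
      ((-Real.cos θinf * (((n : ℝ) - 1) * cU ((n : ℤ) - 1 - 1) (Real.cos θinf))
        + cT ((n : ℤ) - 1) (Real.cos θinf)) /
      ((n : ℝ) * ((n : ℝ) * cU ((n : ℤ) - 1) (Real.cos θinf))))) := by
    apply Tendsto.div
    · exact (hcos.neg.mul (tendsto_const_nhds.mul (tendsto_cU _ hηt))).add (tendsto_cT _ hcos)
    · exact tendsto_const_nhds.mul (tendsto_const_nhds.mul (tendsto_cU _ hξt))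
    · exact (mul_pos hn0 (mul_pos hn0 hμ)).ne'
  -- limit of the other log terms
  have hR : Tendsto (fun k => ∑ j ∈ (Finset.range n).erase 0,
      Real.log (us k - Real.cos (θs k - 2 * π * j / n)) * Real.cos (2 * π * j / n)) atTop
      (𝓝 (∑ j ∈ (Finset.range n).erase 0,
      Real.log (Real.cos θinf - Real.cos (θinf - 2 * π * j / n)) * Real.cos (2 * π * j / n))) := by
    apply tendsto_finset_sum
    intro j hj
    rw [Finset.mem_erase, Finset.mem_range] at hj
    have hδ : 0 < Real.cos θinf - Real.cos (θinf - 2 * π * j / n) :=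
      sub_pos.2 (coslt n hn h0 h1 (Nat.one_le_iff_ne_zero.2 hj.1) hj.2)
    have hinner : Tendsto (fun k => us k - Real.cos (θs k - 2 * π * j / n)) atTop
        (𝓝 (Real.cos θinf - Real.cos (θinf - 2 * π * j / n))) :=
      hu.sub ((Real.continuous_cos.tendsto _).comp (hθ.sub_const _))
    exact (((Real.continuousAt_log hδ.ne').tendsto).comp hinner).mul_const _
  have h0mem : (0 : ℕ) ∈ Finset.range n := Finset.mem_range.2 hnn
  -- key pointwise identity
  have key : ∀ k, x2 n (us k) (θs k) =
      (-Real.cos (θs k) * (((n : ℝ) - 1) * cU ((n : ℤ) - 1 - 1) (η k))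
        + cT ((n : ℤ) - 1) (Real.cos (θs k))) /
      ((n : ℝ) * ((n : ℝ) * cU ((n : ℤ) - 1) (ξ k)))
      + ((n : ℝ) - 1) / (n : ℝ) ^ 2 *
        (Real.log (us k - Real.cos (θs k)) + ∑ j ∈ (Finset.range n).erase 0,
          Real.log (us k - Real.cos (θs k - 2 * π * j / n)) * Real.cos (2 * π * j / n)) := by
    intro k
    have hd0 : us k - Real.cos (θs k) ≠ 0 := (hdpos k).ne'
    have e1 : Real.cos ((n : ℝ) * θs k) = cT (n : ℤ) (Real.cos (θs k)) := by
      rw [cT, Polynomial.Chebyshev.T_real_cos]; norm_cast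
    have e2 : Real.cos (((n : ℝ) - 1) * θs k) = cT ((n : ℤ) - 1) (Real.cos (θs k)) := by
      rw [cT, Polynomial.Chebyshev.T_real_cos]; push_cast; ring_nf
    have hTu : cT ((n : ℤ) - 1) (us k) = cT ((n : ℤ) - 1) (Real.cos (θs k))
        + (us k - Real.cos (θs k)) * ((((n : ℤ) - 1 : ℤ) : ℝ) * cU ((n : ℤ) - 1 - 1) (η k)) := by
      have := hslope2 k; linarith
    have e0 : Real.log (us k - Real.cos (θs k - 2 * π * (0 : ℕ) / n)) *
        Real.cos (2 * π * (0 : ℕ) / n) = Real.log (us k - Real.cos (θs k)) := by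
      norm_num
    have frac : (-(cT ((n : ℤ) - 1) (us k)) * Real.cos (θs k)
          + us k * cT ((n : ℤ) - 1) (Real.cos (θs k))) /
        ((n : ℝ) * (cT (n : ℤ) (us k) - cT (n : ℤ) (Real.cos (θs k)))) =
        (-Real.cos (θs k) * (((n : ℝ) - 1) * cU ((n : ℤ) - 1 - 1) (η k))
          + cT ((n : ℤ) - 1) (Real.cos (θs k))) /
        ((n : ℝ) * ((n : ℝ) * cU ((n : ℤ) - 1) (ξ k))) := by
      rw [hslope1 k, hTu]
      push_cast
      rcases eq_or_ne (cU ((n : ℤ) - 1) (ξ k)) 0 with h | h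
      · simp [h]
      · field_simp
        ring
    simp only [x2]
    rw [← Finset.add_sum_erase _ _ h0mem, e0, e1, e2, frac]
  -- assemble
  have hsum : Tendsto (fun k => Real.log (us k - Real.cos (θs k))
      + ∑ j ∈ (Finset.range n).erase 0,
        Real.log (us k - Real.cos (θs k - 2 * π * j / n)) * Real.cos (2 * π * j / n))
      atTop atBot :=
    tendsto_atBot_add_right_of_ge' atTop _ hlog (hR.eventually (eventually_le_nhds (lt_add_one _)))
  have h2n : (2 : ℝ) ≤ n := by exact_mod_cast hn
  have hP : 0 < ((n : ℝ) - 1) / (n : ℝ) ^ 2 := div_pos (by linarith) (by positivity)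
  have hmul := (tendsto_const_mul_atBot_of_pos hP).2 hsum
  have hfin := tendsto_atBot_add_left_of_ge' atTop _
    (hA.eventually (eventually_le_nhds (lt_add_one _))) hmul
  exact Tendsto.congr (fun k => (key k).symm) hfin
end

section
/- Let n ≥ 2 be an integer. Then x₁(u,θ) tends to −∞ as (u,θ) tends to (cos(π/n), π/n) within the fundamental domain Ω_n⁰ = {(u,θ) : u > cos θ, 0 ≤ θ ≤ π/n}; that is, for every sequence (u_k, θ_k) in Ω_n⁰ converging to (cos(π/n), π/n), the sequence x₁(u_k, θ_k) tends to −∞. -/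
open Real Finset Filter

/-! Write `u = cos a` with `0 ≤ a < θ ≤ π/n`. The Chebyshev identities turn the rational part of
`x₁` into `-(p/s + q/t)/(2n)`, where `s = sin (n(θ-a)/2)`, `t = sin (n(θ+a)/2)`,
`p = cos ((n-2)(θ-a)/2)` and `q = cos ((n-2)(θ+a)/2)`. At the corner `s, t → 0⁺` with `s ≤ t` and
`p → 1`, so `p/s + q/t ≥ (p+q)/t`, where `p + q → 1 - cos (2π/n) > 0`; hence this part tends to
`-∞`. Of the logarithms only the `j = 1` term is singular, and it is eventually `≤ 0` because its
argument tends to `0` while `sin (2π/n) ≥ 0`; the others converge. -/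

open Topology

lemma cT_cos (k : ℤ) (a : ℝ) : cT k (cos a) = cos (k * a) :=
  Polynomial.Chebyshev.T_real_cos a k

lemma cos_mul_sub_cos_mul (m a θ : ℝ) :
    cos (m * a) - cos (m * θ) = 2 * sin (m * (θ + a) / 2) * sin (m * (θ - a) / 2) := by
  rw [cos_sub_cos, show (m * a - m * θ) / 2 = -(m * (θ - a) / 2) by ring, sin_neg]
  ring_nf

lemma cos_mul_sin_add_cos_mul_sin (m a θ : ℝ) :
    cos ((m - 1) * a) * sin θ + cos a * sin ((m - 1) * θ) =
      sin (m * (θ + a) / 2) * cos ((m - 2) * (θ - a) / 2) +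
        sin (m * (θ - a) / 2) * cos ((m - 2) * (θ + a) / 2) := by
  have two_sin_mul_cos (x y : ℝ) : 2 * (sin x * cos y) = sin (x + y) + sin (x - y) := by
    rw [sin_add, sin_sub]; ring
  have h₁ := two_sin_mul_cos θ ((m - 1) * a)
  have h₂ := two_sin_mul_cos ((m - 1) * θ) a
  have h₃ := two_sin_mul_cos (m * (θ + a) / 2) ((m - 2) * (θ - a) / 2)
  have h₄ := two_sin_mul_cos (m * (θ - a) / 2) ((m - 2) * (θ + a) / 2)
  rw [show m * (θ + a) / 2 + (m - 2) * (θ - a) / 2 = (m - 1) * θ + a by ring,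
    show m * (θ + a) / 2 - (m - 2) * (θ - a) / 2 = θ + (m - 1) * a by ring] at h₃
  rw [show m * (θ - a) / 2 + (m - 2) * (θ + a) / 2 = (m - 1) * θ - a by ring,
    show m * (θ - a) / 2 - (m - 2) * (θ + a) / 2 = θ - (m - 1) * a by ring] at h₄
  linear_combination (h₁ + h₂ - h₃ - h₄) / 2

lemma cos_lt_one_of_pos_of_le_pi {x : ℝ} (hx₀ : 0 < x) (hxπ : x ≤ π) : cos x < 1 := by
  simpa using cos_lt_cos_of_nonneg_of_le_pi le_rfl hxπ hx₀

lemma cos_lt_cos_of_lt_of_lt_two_pi_sub {x y : ℝ} (hx : 0 ≤ x) (hxy : x < y)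
    (hy : y < 2 * π - x) : cos y < cos x := by
  rcases le_or_gt y π with hyπ | hπy
  · exact cos_lt_cos_of_nonneg_of_le_pi hx hyπ hxy
  · rw [← cos_two_pi_sub y]
    exact cos_lt_cos_of_nonneg_of_le_pi hx (by linarith) (by linarith)

lemma sin_le_sin_of_le_of_le_pi_sub {x y : ℝ} (hx : -(π / 2) ≤ x) (hxy : x ≤ y)
    (hxy' : x ≤ π - y) : sin x ≤ sin y := by
  rcases le_total y (π / 2) with hy | hy
  · exact sin_le_sin_of_le_of_le_pi_div_two hx hy hxy
  · rw [← sin_pi_sub y]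
    exact sin_le_sin_of_le_of_le_pi_div_two hx (by linarith) hxy'

lemma sin_half_angles_pos_and_le {n : ℕ} {a θ : ℝ} (hn : 0 < n) (ha : 0 ≤ a) (haθ : a < θ)
    (hθ : θ ≤ π / n) :
    0 < sin (n * (θ - a) / 2) ∧ 0 < sin (n * (θ + a) / 2) ∧
      sin (n * (θ - a) / 2) ≤ sin (n * (θ + a) / 2) := by
  have hn' : (0 : ℝ) < n := by exact_mod_cast hn
  have hnθ : n * θ ≤ π := by rwa [le_div_iff₀' hn'] at hθ
  have hna : n * a < π := by nlinarith
  refine ⟨sin_pos_of_pos_of_lt_pi ?_ ?_, sin_pos_of_pos_of_lt_pi ?_ ?_,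
    sin_le_sin_of_le_of_le_pi_sub ?_ ?_ ?_⟩ <;> nlinarith [pi_pos]

noncomputable def logTerm (n : ℕ) (u θ : ℝ) (j : ℕ) : ℝ :=
  log (u - cos (θ - 2 * π * j / n)) * sin (2 * π * j / n)

lemma logTerm_one_nonpos {n : ℕ} (hn : 2 ≤ n) {u θ : ℝ} (h : |u - cos (θ - 2 * π / n)| ≤ 1) :
    logTerm n u θ 1 ≤ 0 := by
  have hn' : (2 : ℝ) ≤ n := by exact_mod_cast hn
  unfold logTerm
  rw [Nat.cast_one, mul_one, ← log_abs]
  refine mul_nonpos_of_nonpos_of_nonneg (log_nonpos (abs_nonneg _) h)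
    (sin_nonneg_of_nonneg_of_le_pi (by positivity) ?_)
  rw [div_le_iff₀ (by positivity)]
  nlinarith [pi_pos]

lemma x1_cos_eq {n : ℕ} (hn : 2 ≤ n) (a θ : ℝ) :
    x1 n (cos a) θ =
      -(sin (n * (θ + a) / 2) * cos ((n - 2) * (θ - a) / 2) +
          sin (n * (θ - a) / 2) * cos ((n - 2) * (θ + a) / 2)) /
        (2 * n * sin (n * (θ + a) / 2) * sin (n * (θ - a) / 2)) +
      ((n : ℝ) - 1) / (n : ℝ) ^ 2 *
        (logTerm n (cos a) θ 1 + ∑ j ∈ Ioc 1 (n - 1), logTerm n (cos a) θ j) := by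
  rw [x1, cT_cos, cT_cos, Finset.add_sum_Ioc_eq_sum_Icc (by omega : 1 ≤ n - 1)]
  push_cast
  rw [cos_mul_sin_add_cos_mul_sin, mul_sub, cos_mul_sub_cos_mul]
  simp only [logTerm]
  ring_nf

noncomputable def x1Majorant (n : ℕ) (a θ : ℝ) : ℝ :=
  ((n : ℝ) - 1) / (n : ℝ) ^ 2 * ∑ j ∈ Ioc 1 (n - 1), logTerm n (cos a) θ j -
    (cos ((n - 2) * (θ - a) / 2) + cos ((n - 2) * (θ + a) / 2)) / (2 * n) *
      (sin (n * (θ + a) / 2))⁻¹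

lemma add_div_le_div_add_div {s t p q : ℝ} (hs : 0 < s) (hst : s ≤ t) (hp : 0 ≤ p) :
    (p + q) / t ≤ p / s + q / t := by
  rw [add_div]
  gcongr

lemma x1_cos_le_x1Majorant {n : ℕ} (hn : 2 ≤ n) {a θ : ℝ} (ha : 0 ≤ a) (haθ : a < θ)
    (hθ : θ ≤ π / n) (hp : 0 ≤ cos ((n - 2) * (θ - a) / 2))
    (hlog : |cos a - cos (θ - 2 * π / n)| ≤ 1) :
    x1 n (cos a) θ ≤ x1Majorant n a θ := by
  obtain ⟨hs, ht, hst⟩ := sin_half_angles_pos_and_le (by omega) ha haθ hθ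
  have hcoef : (0 : ℝ) ≤ ((n : ℝ) - 1) / (n : ℝ) ^ 2 :=
    div_nonneg (sub_nonneg.2 (by exact_mod_cast (by omega : 1 ≤ n))) (sq_nonneg _)
  have hlog₁ := mul_nonpos_of_nonneg_of_nonpos hcoef (logTerm_one_nonpos hn hlog)
  rw [x1_cos_eq hn, x1Majorant]
  set p := cos ((n - 2) * (θ - a) / 2)
  set q := cos ((n - 2) * (θ + a) / 2)
  set s := sin (n * (θ - a) / 2)
  set t := sin (n * (θ + a) / 2)
  have hn' : (0 : ℝ) < n := by positivity
  have hfrac : (t * p + s * q) / (2 * n * t * s) = (p / s + q / t) / (2 * n) := by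
    field_simp
  have hbound : (p + q) / (2 * n) * t⁻¹ ≤ (p / s + q / t) / (2 * n) := calc
    (p + q) / (2 * n) * t⁻¹ = (p + q) / t / (2 * n) := by ring
    _ ≤ (p / s + q / t) / (2 * n) := by gcongr; exact add_div_le_div_add_div hs hst hp
  rw [neg_div, hfrac, mul_add]
  linarith

lemma cos_pi_div_sub_lt {n j : ℕ} (hj₁ : 1 < j) (hjn : j < n) :
    cos (π / n - 2 * π * j / n) < cos (π / n) := by
  have hn : (0 : ℝ) < n := by exact_mod_cast (by omega : 0 < n)
  have hj₁' : (1 : ℝ) < j := by exact_mod_cast hj₁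
  have hjn' : (j : ℝ) + 1 ≤ n := by exact_mod_cast hjn
  rw [show π / n - 2 * π * j / n = -((2 * j - 1) * (π / n)) by ring, cos_neg]
  refine cos_lt_cos_of_lt_of_lt_two_pi_sub (by positivity) ?_ ?_
  · nlinarith [div_pos pi_pos hn]
  · have : 2 * π = 2 * n * (π / n) := by field_simp
    nlinarith [div_pos pi_pos hn]

lemma tendsto_x1Majorant_atBot {n : ℕ} (hn : 2 ≤ n) {ι : Type*} {l : Filter ι}
    {a θ : ι → ℝ} (ha : Tendsto a l (𝓝 (π / n))) (hθ : Tendsto θ l (𝓝 (π / n)))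
    (ht : ∀ᶠ i in l, 0 < sin (n * (θ i + a i) / 2)) :
    Tendsto (fun i => x1Majorant n (a i) (θ i)) l atBot := by
  have hn' : (2 : ℝ) ≤ n := by exact_mod_cast hn
  have hsum : Tendsto (fun i => ((n : ℝ) - 1) / (n : ℝ) ^ 2 *
      ∑ j ∈ Ioc 1 (n - 1), logTerm n (cos (a i)) (θ i) j) l (𝓝 (((n : ℝ) - 1) / (n : ℝ) ^ 2 *
      ∑ j ∈ Ioc 1 (n - 1), logTerm n (cos (π / n)) (π / n) j)) := by
    refine (tendsto_finsetSum _ fun j hj => ?_).const_mul _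
    obtain ⟨hj₁, hjn⟩ := mem_Ioc.1 hj
    have hne := (sub_pos.2 (cos_pi_div_sub_lt hj₁ (by omega : j < n))).ne'
    exact ((((continuous_cos.tendsto _).comp ha).sub
      ((continuous_cos.tendsto _).comp (hθ.sub_const _))).log hne).mul_const _
  have hpq : Tendsto (fun i => (cos ((n - 2) * (θ i - a i) / 2) +
      cos ((n - 2) * (θ i + a i) / 2)) / (2 * n)) l (𝓝 ((1 - cos (2 * π / n)) / (2 * n))) := by
    have hp := (continuous_cos.tendsto _).comp (((hθ.sub ha).const_mul ((n : ℝ) - 2)).div_const 2)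
    have hq := (continuous_cos.tendsto _).comp (((hθ.add ha).const_mul ((n : ℝ) - 2)).div_const 2)
    rw [sub_self, mul_zero, zero_div, cos_zero] at hp
    rw [show ((n : ℝ) - 2) * (π / n + π / n) / 2 = π - 2 * π / n by field_simp; ring,
      cos_pi_sub] at hq
    exact (hp.add hq).div_const _
  have hpos : 0 < (1 - cos (2 * π / n)) / (2 * n) := by
    have := cos_lt_one_of_pos_of_le_pi (by positivity : 0 < 2 * π / n)
      (by rw [div_le_iff₀ (by positivity)]; nlinarith [pi_pos])
    positivity
  have ht₀ : Tendsto (fun i => sin (n * (θ i + a i) / 2)) l (𝓝[>] 0) := by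
    refine tendsto_nhdsWithin_of_tendsto_nhds_of_eventually_within _ ?_ ht
    have h := (continuous_sin.tendsto _).comp (((hθ.add ha).const_mul (n : ℝ)).div_const 2)
    rwa [show (n : ℝ) * (π / n + π / n) / 2 = π by field_simp; ring, sin_pi] at h
  have hsing := tendsto_neg_atTop_atBot.comp
    (hpq.pos_mul_atTop hpos (tendsto_inv_nhdsGT_zero.comp ht₀))
  simpa only [x1Majorant, sub_eq_add_neg, Function.comp_apply] using hsum.add_atBot hsing

lemma tendsto_x1_cos_atBot {n : ℕ} (hn : 2 ≤ n) {ι : Type*} {l : Filter ι}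
    {a θ : ι → ℝ} (ha : Tendsto a l (𝓝 (π / n))) (hθ : Tendsto θ l (𝓝 (π / n)))
    (hdom : ∀ᶠ i in l, 0 ≤ a i ∧ a i < θ i ∧ θ i ≤ π / n) :
    Tendsto (fun i => x1 n (cos (a i)) (θ i)) l atBot := by
  have hp : ∀ᶠ i in l, 0 ≤ cos ((n - 2) * (θ i - a i) / 2) := by
    have h := (continuous_cos.tendsto _).comp (((hθ.sub ha).const_mul ((n : ℝ) - 2)).div_const 2)
    rw [sub_self, mul_zero, zero_div, cos_zero] at h
    exact h.eventually (eventually_ge_nhds zero_lt_one)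
  have hlog : ∀ᶠ i in l, |cos (a i) - cos (θ i - 2 * π / n)| ≤ 1 := by
    have h := (((continuous_cos.tendsto _).comp ha).sub
      ((continuous_cos.tendsto _).comp (hθ.sub_const (2 * π / n)))).abs
    rw [show π / n - 2 * π / n = -(π / n) by ring, cos_neg, sub_self, abs_zero] at h
    exact h.eventually (eventually_le_nhds zero_lt_one)
  have ht : ∀ᶠ i in l, 0 < sin (n * (θ i + a i) / 2) :=
    hdom.mono fun i ⟨ha₀, haθ, hθπ⟩ => (sin_half_angles_pos_and_le (by omega) ha₀ haθ hθπ).2.1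
  refine tendsto_atBot_mono' l ?_ (tendsto_x1Majorant_atBot hn ha hθ ht)
  filter_upwards [hdom, hp, hlog] with i ⟨ha₀, haθ, hθπ⟩ hpi hlogi
  exact x1_cos_le_x1Majorant hn ha₀ haθ hθπ hpi hlogi

theorem stmt12 (n : ℕ) (hn : 2 ≤ n)
    (us θs : ℕ → ℝ)
    (hmem : ∀ k, Real.cos (θs k) < us k ∧ 0 ≤ θs k ∧ θs k ≤ π / n)
    (hconv : Filter.Tendsto (fun k => (us k, θs k)) Filter.atTop
      (nhds (Real.cos (π / n), π / n))) :
    Filter.Tendsto (fun k => x1 n (us k) (θs k)) Filter.atTop Filter.atBot := by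
  have hu : Tendsto us atTop (𝓝 (cos (π / n))) := (continuous_fst.tendsto _).comp hconv
  have hθ : Tendsto θs atTop (𝓝 (π / n)) := (continuous_snd.tendsto _).comp hconv
  have hn' : (2 : ℝ) ≤ n := by exact_mod_cast hn
  have hπn : 0 < π / n := by positivity
  have hπnπ : π / n ≤ π := div_le_self pi_pos.le (by linarith)
  have ha : Tendsto (fun k => arccos (us k)) atTop (𝓝 (π / n)) := by
    simpa [Function.comp_def, arccos_cos hπn.le hπnπ] using (continuous_arccos.tendsto _).comp hu
  have hu₁ : ∀ᶠ k in atTop, us k ≤ 1 :=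
    hu.eventually (eventually_le_nhds (cos_lt_one_of_pos_of_le_pi hπn hπnπ))
  have hu_ge (k : ℕ) : -1 ≤ us k := (neg_one_le_cos _).trans (hmem k).1.le
  have hcos : ∀ᶠ k in atTop, cos (arccos (us k)) = us k :=
    hu₁.mono fun k hk => cos_arccos (hu_ge k) hk
  refine (tendsto_x1_cos_atBot hn ha hθ ?_).congr' (hcos.mono fun k hk => by rw [hk])
  filter_upwards [hu₁] with k hk
  obtain ⟨hlt, hθ₀, hθπ⟩ := hmem k
  refine ⟨arccos_nonneg _, ?_, hθπ⟩
  calc arccos (us k) < arccos (cos (θs k)) :=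
        strictAntiOn_arccos ⟨neg_one_le_cos _, cos_le_one _⟩ ⟨hu_ge k, hk⟩ hlt
    _ = θs k := arccos_cos hθ₀ (hθπ.trans hπnπ)
end
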